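/- arXiv:2504.15816 — 2 statements merged into one kernel-verified Lean document; each statement's English description precedes it below -/
import Mathlib

section
/- For every β > 0 and every real x, the binary entropy of the Fermi-Dirac occupation, g(x) := −f_β(x) log f_β(x) − (1 − f_β(x)) log(1 − f_β(x)) with f_β(x) = 1/(1+e^{βx}), satisfies g(x) ≤ e^{−β|x|/3}. -/
/-!
The Fermi–Dirac occupation is `sigmoid (-β x)`, and the binary entropy of `sigmoid t` equals
`log (1 + e^{-t}) + t · sigmoid (-t)`; it is even in `t`. For `t ≥ 0` put `v = e^{-t/3} ∈ (0, 1]`.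
Then `log (1 + e^{-t}) ≤ v³`, `sigmoid (-t) = v³ / (1 + v³)`, and `e^{t/3} ≥ 1 + t/3` gives
`t v ≤ 3 (1 - v)`; the bound `v³ + t v³ / (1 + v³) ≤ v` is then a polynomial inequality on `[0, 1]`.
-/

open Real

lemma binEntropy_sigmoid (t : ℝ) :
    binEntropy (sigmoid t) = log (1 + exp (-t)) + t * sigmoid (-t) := by
  have hinv : (sigmoid t)⁻¹ = 1 + exp (-t) := by rw [sigmoid_def, inv_inv]
  have hinv_one_sub : (1 - sigmoid t)⁻¹ = exp t * (1 + exp (-t)) := by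
    rw [← sigmoid_neg, sigmoid_def, inv_inv, neg_neg, mul_add, ← exp_add, add_neg_cancel,
      exp_zero, mul_one, add_comm]
  rw [binEntropy, hinv, hinv_one_sub, log_mul (exp_pos t).ne' (by positivity), log_exp,
    sigmoid_neg]
  ring

lemma mul_exp_neg_le_one_sub_exp_neg (t : ℝ) : t * exp (-t) ≤ 1 - exp (-t) := by
  have h : (t + 1) * exp (-t) ≤ exp t * exp (-t) :=
    mul_le_mul_of_nonneg_right (add_one_le_exp t) (exp_pos _).le
  rw [← exp_add, add_neg_cancel, exp_zero] at h
  linarith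

lemma cube_add_mul_cube_div_le {t v : ℝ} (hv0 : 0 ≤ v) (hv1 : v ≤ 1)
    (htv : t * v ≤ 3 * (1 - v)) : v ^ 3 + t * (v ^ 3 / (1 + v ^ 3)) ≤ v := by
  have hden : 0 < 1 + v ^ 3 := by positivity
  rw [mul_div_assoc', ← le_sub_iff_add_le', div_le_iff₀ hden]
  -- `(1 + v)(1 + v³) - 3v = (v² + v - 1)² + v²(1 - v)`
  nlinarith [mul_le_mul_of_nonneg_right htv (sq_nonneg v),
    mul_nonneg (mul_nonneg hv0 (sub_nonneg.2 hv1)) (sq_nonneg (v ^ 2 + v - 1)),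
    mul_nonneg (mul_nonneg (sq_nonneg v) hv0) (sq_nonneg (1 - v))]

lemma binEntropy_sigmoid_le_of_nonneg {t : ℝ} (ht : 0 ≤ t) :
    binEntropy (sigmoid t) ≤ exp (-t / 3) := by
  set v := exp (-t / 3)
  have hv0 : 0 < v := exp_pos _
  have hv1 : v ≤ 1 := exp_le_one_iff.2 (by linarith)
  have hcube : exp (-t) = v ^ 3 := by rw [← exp_nat_mul]; ring_nf
  have hsigmoid : sigmoid (-t) = v ^ 3 / (1 + v ^ 3) := by
    rw [sigmoid_def, neg_neg, ← inv_inv (exp t), ← exp_neg, hcube]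
    field_simp
    ring
  have htv : t * v ≤ 3 * (1 - v) := by
    have := mul_exp_neg_le_one_sub_exp_neg (t / 3)
    rw [← neg_div] at this
    linarith
  have hlog : log (1 + v ^ 3) ≤ v ^ 3 := by
    linarith [log_le_sub_one_of_pos (show 0 < 1 + v ^ 3 by positivity)]
  rw [binEntropy_sigmoid, hcube, hsigmoid]
  linarith [cube_add_mul_cube_div_le hv0.le hv1 htv]

lemma binEntropy_sigmoid_le (t : ℝ) : binEntropy (sigmoid t) ≤ exp (-|t| / 3) := by
  rcases le_total 0 t with ht | ht
  · rw [abs_of_nonneg ht]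
    exact binEntropy_sigmoid_le_of_nonneg ht
  · rw [abs_of_nonpos ht, ← neg_neg t, sigmoid_neg, binEntropy_one_sub, neg_neg]
    exact binEntropy_sigmoid_le_of_nonneg (neg_nonneg.2 ht)

theorem stmt5_general (β x : ℝ) :
    -(1 / (1 + Real.exp (β * x))) * Real.log (1 / (1 + Real.exp (β * x)))
      - (1 - 1 / (1 + Real.exp (β * x))) * Real.log (1 - 1 / (1 + Real.exp (β * x)))
      ≤ Real.exp (-(β * |x|) / 3) := by
  have hf : 1 / (1 + exp (β * x)) = sigmoid (-(β * x)) := by rw [sigmoid_def, neg_neg, one_div]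
  calc _ = binEntropy (sigmoid (-(β * x))) := by
          rw [hf, binEntropy_eq_negMulLog_add_negMulLog_one_sub, negMulLog, negMulLog]
          ring
    _ ≤ exp (-|-(β * x)| / 3) := binEntropy_sigmoid_le _
    _ ≤ exp (-(β * |x|) / 3) := by
          rw [abs_neg, abs_mul]
          gcongr
          exact le_abs_self β

theorem stmt5 (β x : ℝ) (hβ : 0 < β) :
    -(1 / (1 + Real.exp (β * x))) * Real.log (1 / (1 + Real.exp (β * x)))
      - (1 - 1 / (1 + Real.exp (β * x))) * Real.log (1 - 1 / (1 + Real.exp (β * x)))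
      ≤ Real.exp (-(β * |x|) / 3) :=
  stmt5_general β x
end

section
/- Let C be a symmetric n×n matrix whose eigenvalues (in non-decreasing order) satisfy λ_k(C) ≥ k/c_λ for some constant c_λ > 0 and all k = 1, ..., n. Let β > 0, μ ≥ 0, and X₀ = f_β(C − μI) where f_β(x) = 1/(1+e^{βx}) is applied spectrally. Then Tr[X₀] ≤ c_λ(μ + β^{−1}) + 1. -/
/-!
The trace is `∑ₖ f_β(λₖ - μ)` over the sorted eigenvalues `λₖ ≥ (k + 1) / c_λ`. Since
`f_β(y) ≤ min 1 (e^{-βy})`, the first `⌈c_λ μ⌉` terms are at most `1` each, and the remaining ones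
are dominated by a geometric series of ratio `r = e^{-β/c_λ}`, whose sum `r / (1 - r)` is at most
`c_λ / β` because `1 + β/c_λ ≤ e^{β/c_λ}`.
-/

open Matrix

namespace Matrix.IsHermitian

variable {n 𝕜 : Type*} [RCLike 𝕜] [Fintype n] [DecidableEq n] {A : Matrix n n 𝕜}

lemma trace_cfc (hA : A.IsHermitian) (f : ℝ → ℝ) :
    (hA.cfc f).trace = ∑ i, (f (hA.eigenvalues i) : 𝕜) := by
  rw [IsHermitian.cfc, Unitary.conjStarAlgAut_apply, trace_mul_cycle,
    Unitary.coe_star_mul_self, one_mul, trace_diagonal]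
  rfl

lemma cfc_sub_smul_one (hA : A.IsHermitian) (μ : ℝ) (hAμ : (A - μ • 1).IsHermitian)
    (f : ℝ → ℝ) : hAμ.cfc f = hA.cfc fun x => f (x - μ) := by
  have hshift : cfc (fun x : ℝ => x - μ) A = A - μ • 1 := by
    rw [cfc_sub (fun x : ℝ => x) (fun _ => μ) A, cfc_id' ℝ A, cfc_const μ A,
      Algebra.algebraMap_eq_smul_one]
  rw [← hAμ.cfc_eq, ← hA.cfc_eq, ← hshift,
    ← cfc_comp' f (· - μ) A ((finite_real_spectrum.image _).continuousOn f)]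

end Matrix.IsHermitian

lemma one_div_one_add_exp_le_min (y : ℝ) : 1 / (1 + Real.exp y) ≤ min 1 (Real.exp (-y)) := by
  have hy := Real.exp_pos y
  refine le_min ?_ ?_
  · rw [div_le_one (by positivity)]; linarith
  · rw [Real.exp_neg, one_div]
    exact inv_anti₀ hy (by linarith)

lemma sum_range_exp_neg_mul_succ_le {s : ℝ} (hs : 0 < s) (N : ℕ) :
    ∑ j ∈ Finset.range N, Real.exp (-(s * (j + 1))) ≤ s⁻¹ := by
  set r := Real.exp (-s)
  have hr0 : 0 < r := Real.exp_pos _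
  have hr1 : r < 1 := Real.exp_lt_one_iff.mpr (by linarith)
  have hr : r * (1 + s) ≤ 1 :=
    calc r * (1 + s) ≤ r * Real.exp s := by gcongr; linarith [Real.add_one_le_exp s]
      _ = 1 := by rw [← Real.exp_add, neg_add_cancel, Real.exp_zero]
  calc ∑ j ∈ Finset.range N, Real.exp (-(s * (j + 1)))
      = r * ∑ j ∈ Finset.range N, r ^ j := by
        rw [Finset.mul_sum]
        refine Finset.sum_congr rfl fun j _ => ?_
        rw [← pow_succ', ← Real.exp_nat_mul]; push_cast; ring_nf
    _ ≤ r * (1 / (1 - r)) := by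
        have hgeom := geom_sum_Ico_le_of_lt_one (m := 0) (n := N) hr0.le hr1
        rw [← Finset.range_eq_Ico, pow_zero] at hgeom
        exact mul_le_mul_of_nonneg_left hgeom hr0.le
    _ ≤ s⁻¹ := by
        rw [mul_one_div, div_le_iff₀ (by linarith), inv_mul_eq_div, le_div_iff₀ hs]; linarith

lemma sum_range_min_one_exp_le {s x : ℝ} (hs : 0 < s) (hx : 0 ≤ x) (N : ℕ) :
    ∑ k ∈ Finset.range N, min 1 (Real.exp (s * (x - (k + 1)))) ≤ x + 1 + s⁻¹ := by
  set g : ℕ → ℝ := fun k => min 1 (Real.exp (s * (x - (k + 1))))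
  set m := ⌈x⌉₊
  have hhead : ∑ k ∈ Finset.range m, g k ≤ x + 1 :=
    calc ∑ k ∈ Finset.range m, g k ≤ ∑ k ∈ Finset.range m, (1 : ℝ) :=
          Finset.sum_le_sum fun k _ => min_le_left _ _
      _ ≤ x + 1 := by simpa using (Nat.ceil_lt_add_one hx).le
  have htail : ∑ j ∈ Finset.range N, g (m + j) ≤ s⁻¹ := by
    refine le_trans (Finset.sum_le_sum fun j _ => ?_) (sum_range_exp_neg_mul_succ_le hs N)
    refine (min_le_right _ _).trans (Real.exp_le_exp.mpr ?_)
    push_cast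
    linarith [mul_le_mul_of_nonneg_left (Nat.le_ceil x) hs.le]
  calc ∑ k ∈ Finset.range N, g k ≤ ∑ k ∈ Finset.range (m + N), g k :=
        Finset.sum_le_sum_of_subset_of_nonneg (Finset.range_subset_range.mpr (by omega))
          fun k _ _ => by positivity
    _ = ∑ k ∈ Finset.range m, g k + ∑ j ∈ Finset.range N, g (m + j) := Finset.sum_range_add ..
    _ ≤ x + 1 + s⁻¹ := add_le_add hhead htail

theorem stmt16 {N : ℕ} (C : Matrix (Fin N) (Fin N) ℝ) (hC : C.IsHermitian)
    (cl β μ : ℝ) (hcl : 0 < cl) (hβ : 0 < β) (hμ : 0 ≤ μ)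
    (hgrow : ∀ k : Fin N,
      ((k : ℕ) + 1 : ℝ) / cl ≤ hC.eigenvalues (Tuple.sort hC.eigenvalues k))
    (hCμ : (C - μ • 1).IsHermitian) :
    (hCμ.cfc fun x => 1 / (1 + Real.exp (β * x))).trace ≤ cl * (μ + β⁻¹) + 1 := by
  rw [hC.cfc_sub_smul_one μ hCμ, hC.trace_cfc, ← Equiv.sum_comp (Tuple.sort hC.eigenvalues)]
  have hterm (k : Fin N) :
      1 / (1 + Real.exp (β * (hC.eigenvalues (Tuple.sort hC.eigenvalues k) - μ)))
        ≤ min 1 (Real.exp (β / cl * (cl * μ - ((k : ℕ) + 1)))) := by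
    refine (one_div_one_add_exp_le_min _).trans (min_le_min_left _ (Real.exp_le_exp.mpr ?_))
    have := mul_le_mul_of_nonneg_left (hgrow k) hβ.le
    field_simp at this ⊢
    linarith
  calc _ ≤ ∑ k : Fin N, min 1 (Real.exp (β / cl * (cl * μ - ((k : ℕ) + 1)))) :=
        Finset.sum_le_sum fun k _ => by simpa using hterm k
    _ ≤ cl * μ + 1 + (β / cl)⁻¹ := by
        rw [Fin.sum_univ_eq_sum_range (fun k => min 1 (Real.exp (β / cl * (cl * μ - (k + 1)))))]
        exact sum_range_min_one_exp_le (div_pos hβ hcl) (by positivity) N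
    _ = cl * (μ + β⁻¹) + 1 := by field_simp; ring
end
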